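/- arXiv:0909.0171 — 2 statements merged into one kernel-verified Lean document; each statement's English description precedes it below -/
import Mathlib

section
/- If f : P₁ × ⋯ × Pₙ → P' is an order-preserving, cover-stable map between dcpo presentations, then the map f̄ : P̄₁ × ⋯ × P̄ₙ → P̄' defined by f̄(X₁,…,Xₙ) = ⟨{f(x₁,…,xₙ) | xᵢ ∈ Xᵢ}⟩ is a well-defined Scott-continuous extension of f, and is the unique such extension. -/
section Pres
variable {P : Type*} [Preorder P]

/-- A `C`-ideal: downward closed and closed under covers. -/
def IsCIdeal (C : P → Set P → Prop) (X : Set P) : Prop :=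
  (∀ x ∈ X, ∀ y, y ≤ x → y ∈ X) ∧ ∀ x U, C x U → U ⊆ X → x ∈ X

/-- The collection of `C`-ideals, ordered by inclusion. -/
abbrev CIdl (C : P → Set P → Prop) : Type _ := {X : Set P // IsCIdeal C X}

/-- The `C`-ideal generated by a set. -/
def genC (C : P → Set P → Prop) (S : Set P) : Set P := ⋂₀ {X | IsCIdeal C X ∧ S ⊆ X}

lemma isCIdeal_sInter (C : P → Set P → Prop) (T : Set (Set P))
    (hT : ∀ X ∈ T, IsCIdeal C X) : IsCIdeal C (⋂₀ T) := by
  refine ⟨?_, ?_⟩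
  · intro x hx y hyx
    rw [Set.mem_sInter] at *
    intro X hX
    exact (hT X hX).1 x (hx X hX) y hyx
  · intro x U hU hsub
    rw [Set.mem_sInter]
    intro X hX
    exact (hT X hX).2 x U hU fun u hu => Set.mem_sInter.mp (hsub hu) X hX

lemma isCIdeal_genC (C : P → Set P → Prop) (S : Set P) : IsCIdeal C (genC C S) :=
  isCIdeal_sInter C _ fun _ hX => hX.1

lemma subset_genC (C : P → Set P → Prop) (S : Set P) : S ⊆ genC C S :=
  fun _ hs => Set.mem_sInter.mpr fun _ hX => hX.2 hs

noncomputable instance instInfCIdl (C : P → Set P → Prop) : InfSet (CIdl C) :=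
  ⟨fun S => ⟨⋂₀ (Subtype.val '' S),
    isCIdeal_sInter C _ (by rintro X ⟨Y, _, rfl⟩; exact Y.2)⟩⟩

noncomputable instance instCompleteLatticeCIdl (C : P → Set P → Prop) :
    CompleteLattice (CIdl C) :=
  completeLatticeOfInf _ (by
    intro S
    constructor
    · intro X hX
      exact fun a ha => Set.mem_sInter.mp ha X.1 ⟨X, hX, rfl⟩
    · intro Y hY a ha
      refine Set.mem_sInter.mpr ?_
      rintro Z ⟨X, hX, rfl⟩
      exact hY hX ha)

/-- The natural map `x ↦ ⟨x⟩` from a presentation into its `C`-ideals. -/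
def etaC (C : P → Set P → Prop) (x : P) : CIdl C := ⟨genC C {x}, isCIdeal_genC C _⟩

/-- The free dcpo over a dcpo presentation: the least family of `C`-ideals containing
all principal `C`-ideals and closed under directed joins. -/
def OverC (C : P → Set P → Prop) : Set (CIdl C) :=
  ⋂₀ {Y | (∀ x, etaC C x ∈ Y) ∧
      ∀ S ⊆ Y, S.Nonempty → DirectedOn (· ≤ ·) S → sSup S ∈ Y}

end Pres

section Filt
variable {A : Type*}

/-- `F` is a filter: nonempty, upward closed, downward directed. -/
def IsFilt [Preorder A] (F : Set A) : Prop :=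
  F.Nonempty ∧ (∀ a ∈ F, ∀ b, a ≤ b → b ∈ F) ∧
    ∀ a ∈ F, ∀ b ∈ F, ∃ c ∈ F, c ≤ a ∧ c ≤ b

/-- `I` is an ideal: nonempty, downward closed, upward directed. -/
def IsIdl [Preorder A] (I : Set A) : Prop :=
  I.Nonempty ∧ (∀ a ∈ I, ∀ b, b ≤ a → b ∈ I) ∧
    ∀ a ∈ I, ∀ b ∈ I, ∃ c ∈ I, a ≤ c ∧ b ≤ c

/-- The free co-directed meet completion of `A`: filters ordered by reverse inclusion. -/
def FComp (A : Type u) [Preorder A] : Type u := {F : Set A // IsFilt F}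

instance [Preorder A] : PartialOrder (FComp A) where
  le x y := y.1 ⊆ x.1
  le_refl x := subset_rfl
  le_trans x y z h1 h2 := Set.Subset.trans h2 h1
  le_antisymm x y h1 h2 := Subtype.ext (subset_antisymm h2 h1)

/-- The embedding `↑ : A → ℱ(A)` sending `a` to the principal filter. -/
def pf [Preorder A] (a : A) : FComp A :=
  ⟨{b | a ≤ b}, ⟨a, le_refl a⟩, fun x hx b hb => le_trans hx hb,
    fun x hx y hy => ⟨a, le_refl a, hx, hy⟩⟩

noncomputable instance [Lattice A] [BoundedOrder A] : InfSet (FComp A) :=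
  ⟨fun S => ⟨⋂₀ {F | IsFilt F ∧ ∀ x ∈ S, x.1 ⊆ F}, by
    refine ⟨⟨⊤, ?_⟩, ?_, ?_⟩
    · refine Set.mem_sInter.mpr ?_
      rintro F ⟨⟨⟨w, hw⟩, hup, _⟩, _⟩
      exact hup w hw ⊤ le_top
    · intro a ha b hab
      refine Set.mem_sInter.mpr fun F hF => ?_
      exact hF.1.2.1 a (Set.mem_sInter.mp ha F hF) b hab
    · intro a ha b hb
      refine ⟨a ⊓ b, ?_, inf_le_left, inf_le_right⟩
      refine Set.mem_sInter.mpr fun F hF => ?_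
      obtain ⟨c, hc, hca, hcb⟩ :=
        hF.1.2.2 a (Set.mem_sInter.mp ha F hF) b (Set.mem_sInter.mp hb F hF)
      exact hF.1.2.1 c hc (a ⊓ b) (le_inf hca hcb)⟩⟩

noncomputable instance [Lattice A] [BoundedOrder A] : CompleteLattice (FComp A) :=
  completeLatticeOfInf _ (by
    intro S
    constructor
    · intro x hx
      show x.1 ⊆ (sInf S).1
      intro a ha
      exact Set.mem_sInter.mpr fun F hF => hF.2 x hx ha
    · intro y hY
      show (sInf S).1 ⊆ y.1
      intro a ha
      exact Set.mem_sInter.mp ha y.1 ⟨y.2, fun x hx => hY hx⟩)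

/-- The lifting of a monotone map to the filter completions. -/
def liftF {ι : Type*} {A : ι → Type*} {B : Type*} [∀ i, Preorder (A i)] [Preorder B]
    (f : (∀ i, A i) → B) (hf : Monotone f) (x : ∀ i, FComp (A i)) : FComp B :=
  ⟨{b | ∃ a : ∀ i, A i, (∀ i, a i ∈ (x i).1) ∧ f a ≤ b}, by
    refine ⟨?_, ?_, ?_⟩
    · exact ⟨f (fun i => ((x i).2.1).choose), fun i => ((x i).2.1).choose,
        fun i => ((x i).2.1).choose_spec, le_rfl⟩
    · rintro b ⟨a, ha, hab⟩ c hbc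
      exact ⟨a, ha, hab.trans hbc⟩
    · rintro b ⟨a1, ha1, h1⟩ c ⟨a2, ha2, h2⟩
      choose g hg hga1 hga2 using fun i => (x i).2.2.2 (a1 i) (ha1 i) (a2 i) (ha2 i)
      exact ⟨f g, ⟨g, hg, le_rfl⟩, (hf fun i => hga1 i).trans h1,
        (hf fun i => hga2 i).trans h2⟩⟩

/-- The co-Scott continuous extension of binary join to the filter completion. -/
def supF [Lattice A] (x y : FComp A) : FComp A :=
  liftF (A := fun _ : Fin 2 => A) (fun a => a 0 ⊔ a 1)
    (fun _ _ hab => sup_le_sup (hab 0) (hab 1)) ![x, y]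

/-- The co-Scott continuous extension of binary meet to the filter completion. -/
def infF [Lattice A] (x y : FComp A) : FComp A :=
  liftF (A := fun _ : Fin 2 => A) (fun a => a 0 ⊓ a 1)
    (fun _ _ hab => inf_le_inf (hab 0) (hab 1)) ![x, y]

/-- A map is co-Scott continuous if it preserves meets of nonempty co-directed sets. -/
def CoScottCont {α β : Type*} [Preorder α] [Preorder β] (g : α → β) : Prop :=
  ∀ S : Set α, S.Nonempty → DirectedOn (· ≥ ·) S → ∀ x, IsGLB S x → IsGLB (g '' S) (g x)

/-- A map is Scott continuous if it preserves joins of nonempty directed sets. -/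
def ScottContOn {α β : Type*} [Preorder α] [Preorder β] (T : Set α) (g : α → β) : Prop :=
  ∀ S ⊆ T, S.Nonempty → DirectedOn (· ≤ ·) S → ∀ x, IsLUB S x → IsLUB (g '' S) (g x)

/-- The covering relation `C_A` of the dcpo presentation `Δ(A)` on `ℱ(A)`. -/
def covD [Preorder A] (x : FComp A) (U : Set (FComp A)) : Prop :=
  U.Nonempty ∧ DirectedOn (· ≤ ·) U ∧
    ∀ I : Set A, IsIdl I → (∀ x' ∈ U, ∃ a' ∈ I, x' ≤ pf a') → ∃ a ∈ I, x ≤ pf a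

/-- `e : A → C` is a canonical extension: a dense and compact lattice completion. -/
def IsCanExt {A C : Type*} [Lattice A] [CompleteLattice C] (e : A → C) : Prop :=
  (∀ a b, e a ≤ e b ↔ a ≤ b) ∧
  (∀ a b, e (a ⊔ b) = e a ⊔ e b) ∧
  (∀ a b, e (a ⊓ b) = e a ⊓ e b) ∧
  (∀ u v : C, ¬ u ≤ v → ∃ F I : Set A, IsFilt F ∧ IsIdl I ∧
    sInf (e '' F) ≤ u ∧ ¬ sInf (e '' F) ≤ v ∧ v ≤ sSup (e '' I) ∧ ¬ u ≤ sSup (e '' I)) ∧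
  (∀ F I : Set A, IsFilt F → IsIdl I → sInf (e '' F) ≤ sSup (e '' I) →
    ∃ b ∈ F, ∃ a ∈ I, b ≤ a)

/-- `f` is an operator: it preserves binary joins in each coordinate. -/
def IsOperator {ι : Type*} [DecidableEq ι] {A : ι → Type*} {B : Type*}
    [∀ i, Lattice (A i)] [Lattice B] (f : (∀ i, A i) → B) : Prop :=
  ∀ (a : ∀ i, A i) (i : ι) (b : A i),
    f (Function.update a i (a i ⊔ b)) = f a ⊔ f (Function.update a i b)

end Filt

section Terms

/-- Terms over a signature `Ω` with arities `ar`, in `n` variables. -/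
inductive OTerm (Ω : Type*) (ar : Ω → ℕ) (n : ℕ) : Type _ where
  | var : Fin n → OTerm Ω ar n
  | op : (ω : Ω) → (Fin (ar ω) → OTerm Ω ar n) → OTerm Ω ar n

/-- Evaluation of a term under an interpretation of the operation symbols. -/
def evalT {Ω : Type*} {ar : Ω → ℕ} {n : ℕ} {A : Type*}
    (interp : ∀ ω, (Fin (ar ω) → A) → A) (v : Fin n → A) : OTerm Ω ar n → A
  | .var i => v i
  | .op ω args => interp ω (fun j => evalT interp v (args j))

end Terms

/-- The lifting of `f` to C-ideals: `f̄(X₁,…,Xₙ) = ⟨{f(x₁,…,xₙ) | xᵢ ∈ Xᵢ}⟩`. -/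
def fbarP {n : ℕ} {P : Fin n → Type*} [∀ i, Preorder (P i)] {P' : Type*} [Preorder P']
    (C : ∀ i, P i → Set (P i) → Prop) (C' : P' → Set P' → Prop)
    (f : (∀ i, P i) → P') (X : ∀ i, CIdl (C i)) : CIdl C' :=
  ⟨genC C' {b | ∃ x : ∀ i, P i, (∀ i, x i ∈ (X i).1) ∧ b = f x}, isCIdeal_genC C' _⟩

/-!
Monotonicity and cover-stability of `f` make, for every `C'`-ideal `J` and tuple `x`, the set
`{w | f (x[i ↦ w]) ∈ J}` a `Cᵢ`-ideal. Hence if `f` maps a product of generating sets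
into `J`, it maps the product of the generated `C`-ideals into `J`, one coordinate at a time.
Applied to singletons this gives `f̄ ⟨x⟩ = ⟨f x⟩`; applied to the unions of a directed family it
gives preservation of directed joins, because finitely many members of a directed set have a
common upper bound. That `f̄` lands in the free dcpo, and its uniqueness, then follow by
induction over the free dcpos, again one coordinate at a time.
-/

open Function

section Presentation
variable {P : Type*} [Preorder P] (C : P → Set P → Prop)

lemma genC_subset {S X : Set P} (hX : IsCIdeal C X) (hS : S ⊆ X) : genC C S ⊆ X :=
  Set.sInter_subset_of_mem ⟨hX, hS⟩

lemma val_iSup_CIdl {κ : Sort*} (Z : κ → CIdl C) : (⨆ j, Z j).1 = genC C (⋃ j, (Z j).1) := by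
  refine subset_antisymm ?_ (genC_subset C (⨆ j, Z j).2 (Set.iUnion_subset fun j => le_iSup Z j))
  exact iSup_le (a := (⟨_, isCIdeal_genC C _⟩ : CIdl C)) fun j =>
    (Set.subset_iUnion (fun j => (Z j).1) j).trans (subset_genC C _)

lemma etaC_mem_OverC (x : P) : etaC C x ∈ OverC C :=
  Set.mem_sInter.mpr fun _ hY => hY.1 x

lemma sSup_mem_OverC {S : Set (CIdl C)} (hS : S ⊆ OverC C) (hne : S.Nonempty)
    (hdir : DirectedOn (· ≤ ·) S) : sSup S ∈ OverC C :=
  Set.mem_sInter.mpr fun _ hY => hY.2 S (hS.trans (Set.sInter_subset_of_mem hY)) hne hdir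

lemma OverC_subset {Y : Set (CIdl C)} (h_eta : ∀ x, etaC C x ∈ Y)
    (h_sup : ∀ S ⊆ Y, S.Nonempty → DirectedOn (· ≤ ·) S → sSup S ∈ Y) : OverC C ⊆ Y :=
  Set.sInter_subset_of_mem ⟨h_eta, h_sup⟩

end Presentation

lemma Function.sSup_image_update {ι : Type*} [DecidableEq ι] {L : ι → Type*}
    [∀ i, CompleteLattice (L i)] (X : ∀ i, L i) (a : ι) {T : Set (L a)} (hT : T.Nonempty) :
    sSup (update X a '' T) = update X a (sSup T) := by
  ext j
  simp only [sSup_image, iSup_apply]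
  rcases eq_or_ne j a with rfl | h
  · simp [sSup_eq_iSup]
  · simp [h, biSup_const hT]

section Product
variable {ι : Type*} [DecidableEq ι] {P : ι → Type*} [∀ i, Preorder (P i)] {P' : Type*}
  [Preorder P'] {C : ∀ i, P i → Set (P i) → Prop} {C' : P' → Set P' → Prop}
  {f : (∀ i, P i) → P'}

variable (C C') in
def CoverStable (f : (∀ i, P i) → P') : Prop :=
  ∀ (x : ∀ i, P i) (i : ι) (U : Set (P i)), C i (x i) U →
    C' (f x) ((fun y => f (update x i y)) '' U)

lemma CoverStable.isCIdeal_preimage_update (hf : Monotone f) (hstab : CoverStable C C' f)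
    {J : Set P'} (hJ : IsCIdeal C' J) (x : ∀ i, P i) (i : ι) :
    IsCIdeal (C i) {w | f (update x i w) ∈ J} := by
  refine ⟨fun w hw w' hw' => hJ.1 _ hw _ (hf (update_mono hw')), fun w U hU hUJ => ?_⟩
  refine hJ.2 _ _ (hstab (update x i w) i U (by rwa [update_self])) ?_
  rintro _ ⟨u, hu, rfl⟩
  change f (update (update x i w) i u) ∈ J
  rw [update_idem]
  exact hUJ hu

lemma CoverStable.mem_of_mem_genC [Fintype ι] (hf : Monotone f) (hstab : CoverStable C C' f)
    {J : Set P'} (hJ : IsCIdeal C' J) {X : ∀ i, Set (P i)}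
    (hX : ∀ x, (∀ i, x i ∈ X i) → f x ∈ J) {x : ∀ i, P i}
    (hx : ∀ i, x i ∈ genC (C i) (X i)) : f x ∈ J := by
  suffices ∀ s : Finset ι, ∀ x : ∀ i, P i, (∀ i ∈ s, x i ∈ genC (C i) (X i)) →
      (∀ i ∉ s, x i ∈ X i) → f x ∈ J from
    this Finset.univ x (fun i _ => hx i) (by simp)
  intro s
  induction s using Finset.induction_on with
  | empty => exact fun x _ hout => hX x fun i => hout i (Finset.notMem_empty i)
  | insert a s ha ih =>
    intro x hin hout
    have hXa : X a ⊆ {w | f (update x a w) ∈ J} := fun w hw => by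
      refine ih _ (fun i hi => ?_) (fun i hi => ?_)
      · rw [update_of_ne (ne_of_mem_of_not_mem hi ha)]
        exact hin i (Finset.mem_insert_of_mem hi)
      · rcases eq_or_ne i a with rfl | h
        · simpa using hw
        · rw [update_of_ne h]
          exact hout i (by simp [h, hi])
    simpa using genC_subset _ (hstab.isCIdeal_preimage_update hf hJ x a) hXa
      (hin a (Finset.mem_insert_self a s))

lemma OverC_pi_induction [Fintype ι] {Q : (∀ i, CIdl (C i)) → Prop}
    (h_eta : ∀ x : ∀ i, P i, Q fun i => etaC (C i) (x i))
    (h_sup : ∀ S : Set (∀ i, CIdl (C i)), (∀ Y ∈ S, ∀ i, Y i ∈ OverC (C i)) →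
      (∀ Y ∈ S, Q Y) → S.Nonempty → DirectedOn (· ≤ ·) S → Q (sSup S))
    {X : ∀ i, CIdl (C i)} (hX : ∀ i, X i ∈ OverC (C i)) : Q X := by
  suffices ∀ s : Finset ι, ∀ X : ∀ i, CIdl (C i), (∀ i, X i ∈ OverC (C i)) →
      (∀ i ∉ s, ∃ x, X i = etaC (C i) x) → Q X from
    this Finset.univ X hX (by simp)
  intro s
  induction s using Finset.induction_on with
  | empty =>
    intro X _ hprin
    choose x hx using fun i => hprin i (Finset.notMem_empty i)
    simpa only [← funext hx] using h_eta x
  | insert a s ha ih =>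
    intro X hX hprin
    have hupd : ∀ Z ∈ OverC (C a), ∀ i, update X a Z i ∈ OverC (C i) := fun Z hZ i => by
      rcases eq_or_ne i a with rfl | h
      · simpa using hZ
      · simpa [h] using hX i
    have hY : OverC (C a) ⊆ {Z | Z ∈ OverC (C a) ∧ Q (update X a Z)} := by
      refine OverC_subset _ (fun z => ⟨etaC_mem_OverC _ z, ?_⟩) fun T hT hne hdir => ?_
      · refine ih _ (hupd _ (etaC_mem_OverC _ z)) fun i hi => ?_
        rcases eq_or_ne i a with rfl | h
        · exact ⟨z, by simp⟩
        · simpa [h] using hprin i (by simp [h, hi])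
      · refine ⟨sSup_mem_OverC _ (fun Z hZ => (hT hZ).1) hne hdir, ?_⟩
        rw [← sSup_image_update X a hne]
        refine h_sup _ ?_ ?_ (hne.image _) (hdir.mono_comp fun _ _ h => update_mono h)
        · rintro _ ⟨Z, hZ, rfl⟩
          exact hupd Z (hT hZ).1
        · rintro _ ⟨Z, hZ, rfl⟩
          exact (hT hZ).2
    simpa using (hY (hX a)).2

end Product

section Lift
variable {n : ℕ} {P : Fin n → Type*} [∀ i, Preorder (P i)] {P' : Type*} [Preorder P']
  {C : ∀ i, P i → Set (P i) → Prop} {C' : P' → Set P' → Prop} {f : (∀ i, P i) → P'}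

lemma fbarP_le_iff {X : ∀ i, CIdl (C i)} {J : CIdl C'} :
    fbarP C C' f X ≤ J ↔ ∀ x : ∀ i, P i, (∀ i, x i ∈ (X i).1) → f x ∈ J.1 :=
  ⟨fun h x hx => h (subset_genC _ _ ⟨x, hx, rfl⟩),
    fun h => genC_subset C' J.2 (by rintro _ ⟨x, hx, rfl⟩; exact h x hx)⟩

lemma mem_fbarP {X : ∀ i, CIdl (C i)} {x : ∀ i, P i} (hx : ∀ i, x i ∈ (X i).1) :
    f x ∈ (fbarP C C' f X).1 :=
  fbarP_le_iff.1 le_rfl x hx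

lemma monotone_fbarP : Monotone (fbarP C C' f) := fun _ _ h =>
  fbarP_le_iff.2 fun _ hx => mem_fbarP fun i => h i (hx i)

lemma fbarP_etaC (hf : Monotone f) (hstab : CoverStable C C' f) (x : ∀ i, P i) :
    fbarP C C' f (fun i => etaC (C i) (x i)) = etaC C' (f x) := by
  refine le_antisymm (fbarP_le_iff.2 fun y hy => ?_) (genC_subset C' (fbarP C C' f _).2 ?_)
  · refine hstab.mem_of_mem_genC hf (etaC C' (f x)).2 (X := fun i => {x i}) (fun z hz => ?_) hy
    obtain rfl : z = x := funext hz
    exact subset_genC _ _ rfl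
  · rintro _ rfl
    exact mem_fbarP fun i => subset_genC _ _ rfl

lemma fbarP_sSup (hf : Monotone f) (hstab : CoverStable C C' f) {S : Set (∀ i, CIdl (C i))}
    (hne : S.Nonempty) (hdir : DirectedOn (· ≤ ·) S) :
    fbarP C C' f (sSup S) = sSup (fbarP C C' f '' S) := by
  refine le_antisymm (fbarP_le_iff.2 fun x hx => ?_)
    (sSup_le (by rintro _ ⟨X, hX, rfl⟩; exact monotone_fbarP (le_sSup hX)))
  have hx' : ∀ i, x i ∈ genC (C i) (⋃ Y : S, (Y.1 i).1) := by
    simpa only [sSup_apply, val_iSup_CIdl] using hx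
  refine hstab.mem_of_mem_genC hf (sSup (fbarP C C' f '' S)).2 (fun y hy => ?_) hx'
  simp only [Set.mem_iUnion] at hy
  choose Y hY using hy
  have : Nonempty S := hne.to_subtype
  obtain ⟨Z, hZ⟩ := hdir.directed_val.finset_le (Finset.univ.image Y)
  exact (le_sSup (Set.mem_image_of_mem _ Z.2) : fbarP C C' f Z ≤ _)
    (mem_fbarP fun i => hZ (Y i) (by simp) i (hY i))

end Lift

theorem statement3_general {n : ℕ} {P : Fin n → Type*} [∀ i, Preorder (P i)] {P' : Type*}
    [Preorder P']
    (C : ∀ i, P i → Set (P i) → Prop) (C' : P' → Set P' → Prop)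
    (f : (∀ i, P i) → P') (hf : Monotone f)
    (hstab : ∀ (x : ∀ i, P i) (i : Fin n) (U : Set (P i)), C i (x i) U →
      C' (f x) ((fun y => f (Function.update x i y)) '' U)) :
    (∀ X : ∀ i, CIdl (C i), (∀ i, X i ∈ OverC (C i)) → fbarP C C' f X ∈ OverC C') ∧
    Monotone (fbarP C C' f) ∧
    (∀ x : ∀ i, P i, fbarP C C' f (fun i => etaC (C i) (x i)) = etaC C' (f x)) ∧
    (∀ S : Set (∀ i, CIdl (C i)), (∀ Y ∈ S, ∀ i, Y i ∈ OverC (C i)) →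
      S.Nonempty → DirectedOn (· ≤ ·) S →
      fbarP C C' f (sSup S) = sSup (fbarP C C' f '' S)) ∧
    (∀ g : (∀ i, CIdl (C i)) → CIdl C',
      (∀ x : ∀ i, P i, g (fun i => etaC (C i) (x i)) = etaC C' (f x)) →
      (∀ S : Set (∀ i, CIdl (C i)), (∀ Y ∈ S, ∀ i, Y i ∈ OverC (C i)) →
        S.Nonempty → DirectedOn (· ≤ ·) S → g (sSup S) = sSup (g '' S)) →
      ∀ X, (∀ i, X i ∈ OverC (C i)) → g X = fbarP C C' f X) := by
  refine ⟨fun X hX => ?_, monotone_fbarP, fbarP_etaC hf hstab,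
    fun S _ hne hdir => fbarP_sSup hf hstab hne hdir, fun g hg_eta hg_sup X hX => ?_⟩
  · refine OverC_pi_induction (Q := fun X => fbarP C C' f X ∈ OverC C')
      (fun x => by simpa only [fbarP_etaC hf hstab] using etaC_mem_OverC C' (f x))
      (fun S _ hS hne hdir => ?_) hX
    rw [fbarP_sSup hf hstab hne hdir]
    exact sSup_mem_OverC C' (by rintro _ ⟨Y, hY, rfl⟩; exact hS Y hY) (hne.image _)
      (hdir.mono_comp fun _ _ h => monotone_fbarP h)
  · refine OverC_pi_induction (Q := fun X => g X = fbarP C C' f X)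
      (fun x => by rw [hg_eta, fbarP_etaC hf hstab]) (fun S hSO hS hne hdir => ?_) hX
    rw [hg_sup S hSO hne hdir, fbarP_sSup hf hstab hne hdir, Set.image_congr hS]

/-- the lifting `f̄` of an order-preserving cover-stable map between dcpo
presentations is a well-defined Scott-continuous extension of `f` to the free dcpos, and it
is the unique such extension. -/
theorem statement3 {n : ℕ} {P : Fin n → Type*} [∀ i, Preorder (P i)] {P' : Type*}
    [Preorder P']
    (C : ∀ i, P i → Set (P i) → Prop) (C' : P' → Set P' → Prop)
    (hC : ∀ i x U, C i x U → U.Nonempty ∧ DirectedOn (· ≤ ·) U)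
    (hC' : ∀ x U, C' x U → U.Nonempty ∧ DirectedOn (· ≤ ·) U)
    (f : (∀ i, P i) → P') (hf : Monotone f)
    (hstab : ∀ (x : ∀ i, P i) (i : Fin n) (U : Set (P i)), C i (x i) U →
      C' (f x) ((fun y => f (Function.update x i y)) '' U)) :
    (∀ X : ∀ i, CIdl (C i), (∀ i, X i ∈ OverC (C i)) → fbarP C C' f X ∈ OverC C') ∧
    Monotone (fbarP C C' f) ∧
    (∀ x : ∀ i, P i, fbarP C C' f (fun i => etaC (C i) (x i)) = etaC C' (f x)) ∧
    (∀ S : Set (∀ i, CIdl (C i)), (∀ Y ∈ S, ∀ i, Y i ∈ OverC (C i)) →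
      S.Nonempty → DirectedOn (· ≤ ·) S →
      fbarP C C' f (sSup S) = sSup (fbarP C C' f '' S)) ∧
    (∀ g : (∀ i, CIdl (C i)) → CIdl C',
      (∀ x : ∀ i, P i, g (fun i => etaC (C i) (x i)) = etaC C' (f x)) →
      (∀ S : Set (∀ i, CIdl (C i)), (∀ Y ∈ S, ∀ i, Y i ∈ OverC (C i)) →
        S.Nonempty → DirectedOn (· ≤ ·) S → g (sSup S) = sSup (g '' S)) →
      ∀ X, (∀ i, X i ∈ OverC (C i)) → g X = fbarP C C' f X) :=
  statement3_general C C' f hf hstab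
end

section
/- If f : A₁ × ⋯ × Aₙ → B is an operator between lattices, then its filter-completion extension f^ℱ : ℱ(A₁) × ⋯ × ℱ(Aₙ) → ℱ(B) is cover-stable with respect to the covering relations C_{A₁},…,C_{Aₙ}, C_B. -/
/-!
Let `J` be an ideal of `B` such that each `f^ℱ(x[i := y])`, `y ∈ U`, lies below some `↑b` with
`b ∈ J`. Collect in `I = coordSlice f x i J` the `c : Aᵢ` with `f(a[i := c]) ∈ J` for some `a`
whose other coordinates lie in the filters `xⱼ`. Because `f` preserves binary joins in coordinate
`i` and the filters `xⱼ` are co-directed, `I` is an ideal of `Aᵢ`. Every `y ∈ U` lies below some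
`↑c` with `c ∈ I`, so the cover `xᵢ ◁ U` puts `xᵢ` below such a `↑c`, and then `f^ℱ(x)` lies
below an element of `J`.
-/

lemma le_pf_iff {A : Type*} [Preorder A] (w : FComp A) (b : A) : w ≤ pf b ↔ b ∈ w.1 :=
  ⟨fun h => h le_rfl, fun hb _ hc => w.2.2.1 b hb _ hc⟩

lemma liftF_mono {ι : Type*} {A : ι → Type*} {B : Type*} [∀ i, Preorder (A i)] [Preorder B]
    (f : (∀ i, A i) → B) (hf : Monotone f) : Monotone (liftF f hf) := by
  rintro x x' hx b ⟨a, ha, hab⟩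
  exact ⟨a, fun i => hx i (ha i), hab⟩

section Lift

variable {ι : Type*} [DecidableEq ι] {A : ι → Type*} {B : Type*}

lemma mem_liftF_update_iff [∀ i, Preorder (A i)] [Preorder B] (f : (∀ i, A i) → B)
    (hf : Monotone f) (x : ∀ i, FComp (A i)) (i : ι) (y : FComp (A i)) (b : B) :
    b ∈ (liftF f hf (Function.update x i y)).1 ↔
      ∃ a : ∀ j, A j, (∀ j ≠ i, a j ∈ (x j).1) ∧ ∃ c ∈ y.1, f (Function.update a i c) ≤ b := by
  constructor
  · rintro ⟨a, ha, hab⟩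
    refine ⟨a, fun j hj => ?_, a i, by simpa using ha i, by rwa [Function.update_eq_self]⟩
    simpa [Function.update_of_ne hj] using ha j
  · rintro ⟨a, ha, c, hc, hab⟩
    refine ⟨Function.update a i c, ?_, hab⟩
    exact (Function.forall_update_iff _ fun j (v : A j) => v ∈ (Function.update x i y j).1).2
      ⟨by simpa using hc, fun j hj => by simpa [Function.update_of_ne hj] using ha j hj⟩

lemma exists_forall_ne_mem_le_le [∀ i, Preorder (A i)] (x : ∀ i, FComp (A i)) (i : ι)
    {a₁ a₂ : ∀ j, A j} (h₁ : ∀ j ≠ i, a₁ j ∈ (x j).1) (h₂ : ∀ j ≠ i, a₂ j ∈ (x j).1) :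
    ∃ a : ∀ j, A j, ∀ j ≠ i, a j ∈ (x j).1 ∧ a j ≤ a₁ j ∧ a j ≤ a₂ j := by
  have : ∀ j, ∃ c : A j, j ≠ i → c ∈ (x j).1 ∧ c ≤ a₁ j ∧ c ≤ a₂ j := fun j =>
    if hj : j = i then ⟨a₁ j, fun h => (h hj).elim⟩
    else (x j).2.2.2 _ (h₁ j hj) _ (h₂ j hj) |>.imp fun _ hc _ => hc
  choose a ha using this
  exact ⟨a, ha⟩

lemma IsOperator.map_update_sup [∀ i, Lattice (A i)] [Lattice B] {f : (∀ i, A i) → B}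
    (hop : IsOperator f) (a : ∀ i, A i) (i : ι) (c₁ c₂ : A i) :
    f (Function.update a i (c₁ ⊔ c₂)) =
      f (Function.update a i c₁) ⊔ f (Function.update a i c₂) := by
  simpa using hop (Function.update a i c₁) i c₂

def coordSlice [∀ i, Preorder (A i)] (f : (∀ i, A i) → B) (x : ∀ i, FComp (A i)) (i : ι)
    (J : Set B) : Set (A i) :=
  {c | ∃ a : ∀ j, A j, (∀ j ≠ i, a j ∈ (x j).1) ∧ f (Function.update a i c) ∈ J}

lemma isIdl_coordSlice [∀ i, Lattice (A i)] [Lattice B] {f : (∀ i, A i) → B}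
    (hf : Monotone f) (hop : IsOperator f) (x : ∀ i, FComp (A i)) (i : ι) {J : Set B}
    (hJ : IsIdl J) (hne : (coordSlice f x i J).Nonempty) : IsIdl (coordSlice f x i J) := by
  obtain ⟨-, hJdown, hJdir⟩ := hJ
  refine ⟨hne, ?_, ?_⟩
  · rintro c ⟨a, ha, haJ⟩ c' hc'
    exact ⟨a, ha, hJdown _ haJ _ (hf (Function.update_mono hc'))⟩
  · rintro c₁ ⟨a₁, ha₁, h₁⟩ c₂ ⟨a₂, ha₂, h₂⟩
    obtain ⟨a, ha⟩ := exists_forall_ne_mem_le_le x i ha₁ ha₂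
    obtain ⟨d, hd, hd₁, hd₂⟩ := hJdir _ h₁ _ h₂
    have hle (c : A i) (a' : ∀ j, A j) (h : ∀ j ≠ i, a j ≤ a' j) :
        f (Function.update a i c) ≤ f (Function.update a' i c) :=
      hf (update_le_update_iff.2 ⟨le_rfl, h⟩)
    refine ⟨c₁ ⊔ c₂, ⟨a, fun j hj => (ha j hj).1, hJdown d hd _ ?_⟩, le_sup_left, le_sup_right⟩
    rw [hop.map_update_sup]
    exact sup_le ((hle c₁ a₁ fun j hj => (ha j hj).2.1).trans hd₁)
      ((hle c₂ a₂ fun j hj => (ha j hj).2.2).trans hd₂)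

lemma exists_mem_coordSlice_le_pf [∀ i, Preorder (A i)] [Preorder B] {f : (∀ i, A i) → B}
    (hf : Monotone f) (x : ∀ i, FComp (A i)) (i : ι) {J : Set B} (hJ : IsIdl J)
    {y : FComp (A i)} {b : B} (hb : b ∈ J) (hy : liftF f hf (Function.update x i y) ≤ pf b) :
    ∃ c ∈ coordSlice f x i J, y ≤ pf c := by
  obtain ⟨a, ha, c, hc, hab⟩ := (mem_liftF_update_iff f hf x i y b).1 ((le_pf_iff _ _).1 hy)
  exact ⟨c, ⟨a, ha, hJ.2.1 b hb _ hab⟩, (le_pf_iff _ _).2 hc⟩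

lemma exists_mem_liftF_le_pf [∀ i, Preorder (A i)] [Preorder B] {f : (∀ i, A i) → B}
    (hf : Monotone f) (x : ∀ i, FComp (A i)) (i : ι) {J : Set B} {c : A i}
    (hc : c ∈ coordSlice f x i J) (hxc : x i ≤ pf c) : ∃ b ∈ J, liftF f hf x ≤ pf b := by
  obtain ⟨a, ha, haJ⟩ := hc
  refine ⟨_, haJ, (le_pf_iff _ _).2 ?_⟩
  rw [← Function.update_eq_self i x, mem_liftF_update_iff]
  exact ⟨a, ha, c, (le_pf_iff _ _).1 hxc, le_rfl⟩

end Lift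

theorem statement17_general {n : ℕ} {A : Fin n → Type*} {B : Type*}
    [∀ i, Lattice (A i)] [Lattice B]
    (f : (∀ i, A i) → B) (hf : Monotone f) (hop : IsOperator f) :
    ∀ (x : ∀ i, FComp (A i)) (i : Fin n) (U : Set (FComp (A i))),
      covD (x i) U →
      covD (liftF f hf x) ((fun y => liftF f hf (Function.update x i y)) '' U) := by
  rintro x i U ⟨hne, hdir, hcov⟩
  refine ⟨hne.image _, hdir.mono_comp fun _ _ h => liftF_mono f hf (Function.update_mono h), ?_⟩
  rintro J hJ hU
  have hslice : ∀ y ∈ U, ∃ c ∈ coordSlice f x i J, y ≤ pf c := fun y hy =>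
    let ⟨_, hb, hle⟩ := hU _ (Set.mem_image_of_mem _ hy)
    exists_mem_coordSlice_le_pf hf x i hJ hb hle
  obtain ⟨c, hc, -⟩ := hslice _ hne.some_mem
  obtain ⟨c, hc, hxc⟩ := hcov _ (isIdl_coordSlice hf hop x i hJ ⟨c, hc⟩) hslice
  exact exists_mem_liftF_le_pf hf x i hc hxc

/-- the filter-completion extension of an operator between (bounded) lattices
is cover-stable with respect to the covering relations of the presentations `Δ(Aᵢ)`, `Δ(B)`. -/
theorem statement17 {n : ℕ} {A : Fin n → Type*} {B : Type*}
    [∀ i, Lattice (A i)] [∀ i, BoundedOrder (A i)] [Lattice B] [BoundedOrder B]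
    (f : (∀ i, A i) → B) (hf : Monotone f) (hop : IsOperator f) :
    ∀ (x : ∀ i, FComp (A i)) (i : Fin n) (U : Set (FComp (A i))),
      covD (x i) U →
      covD (liftF f hf x) ((fun y => liftF f hf (Function.update x i y)) '' U) :=
  statement17_general f hf hop
end
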